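/- arXiv:1210.1142 — 3 statements merged into one kernel-verified Lean document; each statement's English description precedes it below -/
import Mathlib

section
/- For a Hopf algebra H with twist F = fᵅ⊗f_ᵅ, the element χ := fᵅ S(f_ᵅ) is invertible with inverse χ⁻¹ = S(f̄ᵅ) f̄_ᵅ, where F⁻¹ = f̄ᵅ⊗f̄_ᵅ. -/
/-!
Apply `φ : a ⊗ b ⊗ c ↦ a S(b) c` to both sides of the cocycle condition rewritten as
`F₂₃⁻¹ F₁₂ = (id ⊗ Δ)(F) · (Δ ⊗ id)(F⁻¹)`. Since `S` is an anti-homomorphism, the left side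
goes to `fᵅ S(f_ᵅ) S(f̄ᵝ) f̄_ᵝ = χ χ⁻¹`; on the right side the antipode axiom contracts the two
coproducts to counits, leaving `(id ⊗ ε)(F) · (ε ⊗ id)(F⁻¹) = 1`. The map
`a ⊗ b ⊗ c ↦ S(a) b S(c)` applied to `F₁₂⁻¹ F₂₃ = (Δ ⊗ id)(F) · (id ⊗ Δ)(F⁻¹)` gives `χ⁻¹ χ = 1`
in the same way.
-/

open TensorProduct LinearMap

variable (K : Type*) [CommRing K] (H : Type*) [Ring H] [HopfAlgebra K H]

/-- The deformed coproduct `Δ^F(ξ) = F * Δ(ξ) * F⁻¹`. -/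
noncomputable def comulF (F Finv : H ⊗[K] H) : H →ₗ[K] H ⊗[K] H :=
  (mulRight K Finv) ∘ₗ (mulLeft K F) ∘ₗ (Coalgebra.comul (R := K))

/-- `F` is a twist with respect to the coproduct `Δ` and counit `ε`:
the 2-cocycle condition `F₁₂ (Δ⊗id)(F) = F₂₃ (id⊗Δ)(F)` (compared in `H ⊗ (H ⊗ H)`
via the associator) and the normalization `(ε⊗id)(F) = 1 = (id⊗ε)(F)`. -/
noncomputable def IsTwist (Δ : H →ₗ[K] H ⊗[K] H) (ε : H →ₗ[K] K) (F : H ⊗[K] H) : Prop :=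
  (Algebra.TensorProduct.assoc K K K H H H (F ⊗ₜ[K] (1:H)))
      * (Algebra.TensorProduct.assoc K K K H H H (TensorProduct.map Δ LinearMap.id F))
    = ((1:H) ⊗ₜ[K] F) * (TensorProduct.map LinearMap.id Δ F)
  ∧ TensorProduct.lid K H (TensorProduct.map ε LinearMap.id F) = 1
  ∧ TensorProduct.rid K H (TensorProduct.map LinearMap.id ε F) = 1

/-- `χ = fᵅ S(f_ᵅ) = μ∘(id⊗S)(F)`. -/
noncomputable def chiF (F : H ⊗[K] H) : H :=
  LinearMap.mul' K H
    (TensorProduct.map LinearMap.id (HopfAlgebra.antipode (R := K)) F)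

/-- `χ⁻¹ = S(f̄ᵅ) f̄_ᵅ = μ∘(S⊗id)(F⁻¹)`. -/
noncomputable def chiFinv (Finv : H ⊗[K] H) : H :=
  LinearMap.mul' K H
    (TensorProduct.map (HopfAlgebra.antipode (R := K)) LinearMap.id Finv)

theorem mul_eq_mul_of_mul_eq_mul_of_inverses {M : Type*} [Monoid M] {a b c d b' c' : M}
    (h : a * b = c * d) (hc : c' * c = 1) (hb : b * b' = 1) : c' * a = d * b' :=
  calc c' * a = c' * (a * b) * b' := by rw [mul_assoc, mul_assoc, hb, mul_one]
    _ = d * b' := by rw [h, ← mul_assoc, hc, one_mul]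

section Bialgebra

open Bialgebra Coalgebra

variable {R A : Type*} [CommSemiring R] [Semiring A] [Bialgebra R A]

theorem twist_cocycle_inv_left {F Finv : A ⊗[R] A}
    (hcocycle : Algebra.TensorProduct.assoc R R R A A A (F ⊗ₜ 1)
        * Algebra.TensorProduct.assoc R R R A A A (map (comul (R := R)) id F)
      = (1 ⊗ₜ F) * map id (comul (R := R)) F)
    (hF : F * Finv = 1) (hF' : Finv * F = 1) :
    (1 ⊗ₜ Finv) * Algebra.TensorProduct.assoc R R R A A A (F ⊗ₜ 1)
      = map id (comul (R := R)) F
        * Algebra.TensorProduct.assoc R R R A A A (map (comul (R := R)) id Finv) :=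
  mul_eq_mul_of_mul_eq_mul_of_inverses hcocycle
    (map_mul_eq_one (Algebra.TensorProduct.includeRight (R := R)) hF')
    (map_mul_eq_one ((Algebra.TensorProduct.assoc R R R A A A).toAlgHom.comp
      (Algebra.TensorProduct.map (comulAlgHom R A) (AlgHom.id R A))) hF)

theorem twist_cocycle_inv_right {F Finv : A ⊗[R] A}
    (hcocycle : Algebra.TensorProduct.assoc R R R A A A (F ⊗ₜ 1)
        * Algebra.TensorProduct.assoc R R R A A A (map (comul (R := R)) id F)
      = (1 ⊗ₜ F) * map id (comul (R := R)) F)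
    (hF : F * Finv = 1) (hF' : Finv * F = 1) :
    Algebra.TensorProduct.assoc R R R A A A (map (comul (R := R)) id F)
        * map id (comul (R := R)) Finv
      = Algebra.TensorProduct.assoc R R R A A A (Finv ⊗ₜ 1) * (1 ⊗ₜ F) :=
  (mul_eq_mul_of_mul_eq_mul_of_inverses hcocycle.symm
    (map_mul_eq_one ((Algebra.TensorProduct.assoc R R R A A A).toAlgHom.comp
      Algebra.TensorProduct.includeLeft) hF')
    (map_mul_eq_one (Algebra.TensorProduct.map (AlgHom.id R A) (comulAlgHom R A)) hF)).symm

theorem lid_map_counit_id_eq_one_of_mul_eq_one {x y : A ⊗[R] A} (hxy : x * y = 1)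
    (hx : TensorProduct.lid R A (map (counit (R := R)) id x) = 1) :
    TensorProduct.lid R A (map (counit (R := R)) id y) = 1 :=
  calc _ = TensorProduct.lid R A (map (counit (R := R)) id x)
        * TensorProduct.lid R A (map (counit (R := R)) id y) := by rw [hx, one_mul]
    _ = 1 := map_mul_eq_one ((Algebra.TensorProduct.lid R A).toAlgHom.comp
      (Algebra.TensorProduct.map (counitAlgHom R A) (AlgHom.id R A))) hxy

theorem rid_map_id_counit_eq_one_of_mul_eq_one {x y : A ⊗[R] A} (hxy : x * y = 1)
    (hx : TensorProduct.rid R A (map id (counit (R := R)) x) = 1) :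
    TensorProduct.rid R A (map id (counit (R := R)) y) = 1 :=
  calc _ = TensorProduct.rid R A (map id (counit (R := R)) x)
        * TensorProduct.rid R A (map id (counit (R := R)) y) := by rw [hx, one_mul]
    _ = 1 := map_mul_eq_one ((Algebra.TensorProduct.rid R R A).toAlgHom.comp
      (Algebra.TensorProduct.map (AlgHom.id R A) (counitAlgHom R A))) hxy

end Bialgebra

namespace HopfAlgebra

open Coalgebra

variable {R A : Type*} [CommSemiring R] [Semiring A] [HopfAlgebra R A]

noncomputable def mul₃IdAntipodeId : A ⊗[R] (A ⊗[R] A) →ₗ[R] A :=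
  mul' R A ∘ₗ map id (mul' R A ∘ₗ map (antipode R) id)

noncomputable def mul₃AntipodeIdAntipode : A ⊗[R] (A ⊗[R] A) →ₗ[R] A :=
  mul' R A ∘ₗ map (antipode R) (mul' R A ∘ₗ map id (antipode R))

@[simp]
theorem mul₃IdAntipodeId_tmul (a b c : A) :
    mul₃IdAntipodeId (a ⊗ₜ[R] (b ⊗ₜ[R] c)) = a * (antipode R b * c) := rfl

@[simp]
theorem mul₃AntipodeIdAntipode_tmul (a b c : A) :
    mul₃AntipodeIdAntipode (a ⊗ₜ[R] (b ⊗ₜ[R] c)) = antipode R a * (b * antipode R c) := rfl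

theorem mul₃IdAntipodeId_tmul_mul_assoc_tmul (a d : A) (u w : A ⊗[R] A) :
    mul₃IdAntipodeId ((a ⊗ₜ[R] u) * Algebra.TensorProduct.assoc R R R A A A (w ⊗ₜ[R] d))
      = a * (mul' R A ((antipode R).lTensor A w)
          * (mul' R A ((antipode R).rTensor A u) * d)) := by
  induction u using TensorProduct.induction_on with
  | zero => simp
  | add u u' hu hu' => simp only [tmul_add, map_add, add_mul, mul_add, hu, hu']
  | tmul p q =>
    induction w using TensorProduct.induction_on with
    | zero => simp
    | add w w' hw hw' => simp only [add_tmul, map_add, mul_add, add_mul, hw, hw']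
    | tmul r s =>
      simp only [Algebra.TensorProduct.assoc_tmul, Algebra.TensorProduct.tmul_mul_tmul,
        mul₃IdAntipodeId_tmul, lTensor_tmul, rTensor_tmul, mul'_apply, antipode_mul_antidistrib,
        mul_assoc]

theorem mul₃AntipodeIdAntipode_assoc_tmul_mul_tmul (b c : A) (u w : A ⊗[R] A) :
    mul₃AntipodeIdAntipode (Algebra.TensorProduct.assoc R R R A A A (u ⊗ₜ[R] b) * (c ⊗ₜ[R] w))
      = antipode R c * (mul' R A ((antipode R).rTensor A u)
          * (mul' R A ((antipode R).lTensor A w) * antipode R b)) := by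
  induction u using TensorProduct.induction_on with
  | zero => simp
  | add u u' hu hu' => simp only [add_tmul, map_add, add_mul, mul_add, hu, hu']
  | tmul p q =>
    induction w using TensorProduct.induction_on with
    | zero => simp
    | add w w' hw hw' => simp only [tmul_add, map_add, mul_add, add_mul, hw, hw']
    | tmul r s =>
      simp only [Algebra.TensorProduct.assoc_tmul, Algebra.TensorProduct.tmul_mul_tmul,
        mul₃AntipodeIdAntipode_tmul, lTensor_tmul, rTensor_tmul, mul'_apply,
        antipode_mul_antidistrib, mul_assoc]

theorem mul₃IdAntipodeId_map_id_comul_mul_assoc_map_comul_id (x y : A ⊗[R] A) :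
    mul₃IdAntipodeId (map id (comul (R := R)) x
        * Algebra.TensorProduct.assoc R R R A A A (map (comul (R := R)) id y))
      = TensorProduct.rid R A (map id (counit (R := R)) x)
        * TensorProduct.lid R A (map (counit (R := R)) id y) := by
  induction x using TensorProduct.induction_on with
  | zero => simp
  | add x x' hx hx' => simp only [map_add, add_mul, hx, hx']
  | tmul a b =>
    induction y using TensorProduct.induction_on with
    | zero => simp
    | add y y' hy hy' => simp only [map_add, mul_add, hy, hy']
    | tmul c d =>
      simp only [map_tmul, id_coe, id_eq, mul₃IdAntipodeId_tmul_mul_assoc_tmul,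
        mul_antipode_lTensor_comul_apply, mul_antipode_rTensor_comul_apply,
        TensorProduct.rid_tmul, TensorProduct.lid_tmul]
      simp only [← Algebra.smul_def, mul_smul_comm, smul_mul_assoc, smul_smul,
        mul_comm (counit c)]

theorem mul₃AntipodeIdAntipode_assoc_map_comul_id_mul_map_id_comul (x y : A ⊗[R] A) :
    mul₃AntipodeIdAntipode (Algebra.TensorProduct.assoc R R R A A A (map (comul (R := R)) id x)
        * map id (comul (R := R)) y)
      = antipode R (TensorProduct.rid R A (map id (counit (R := R)) y))
        * antipode R (TensorProduct.lid R A (map (counit (R := R)) id x)) := by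
  induction x using TensorProduct.induction_on with
  | zero => simp
  | add x x' hx hx' => simp only [map_add, add_mul, mul_add, hx, hx']
  | tmul a b =>
    induction y using TensorProduct.induction_on with
    | zero => simp
    | add y y' hy hy' => simp only [map_add, mul_add, add_mul, hy, hy']
    | tmul c d =>
      simp only [map_tmul, id_coe, id_eq, mul₃AntipodeIdAntipode_assoc_tmul_mul_tmul,
        mul_antipode_lTensor_comul_apply, mul_antipode_rTensor_comul_apply,
        TensorProduct.rid_tmul, TensorProduct.lid_tmul, map_smul]
      simp only [← Algebra.smul_def, mul_smul_comm, smul_mul_assoc, smul_smul,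
        mul_comm (counit a)]

end HopfAlgebra

open HopfAlgebra

theorem mul₃IdAntipodeId_one_tmul_mul_assoc_tmul_one (u w : H ⊗[K] H) :
    mul₃IdAntipodeId ((1 ⊗ₜ[K] u) * Algebra.TensorProduct.assoc K K K H H H (w ⊗ₜ[K] 1))
      = chiF K H w * chiFinv K H u := by
  rw [mul₃IdAntipodeId_tmul_mul_assoc_tmul, one_mul, mul_one]
  rfl

theorem mul₃AntipodeIdAntipode_assoc_tmul_one_mul_one_tmul (u w : H ⊗[K] H) :
    mul₃AntipodeIdAntipode
        (Algebra.TensorProduct.assoc K K K H H H (u ⊗ₜ[K] 1) * (1 ⊗ₜ[K] w))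
      = chiFinv K H u * chiF K H w := by
  rw [mul₃AntipodeIdAntipode_assoc_tmul_mul_tmul, antipode_one, one_mul, mul_one]
  rfl

/-- for a Hopf algebra `H` with twist `F`, the element `χ = fᵅ S(f_ᵅ)` is
invertible with inverse `χ⁻¹ = S(f̄ᵅ) f̄_ᵅ`. -/
theorem chiF_invertible (F Finv : H ⊗[K] H) (hF : F * Finv = 1) (hF' : Finv * F = 1)
    (htw : IsTwist K H (Coalgebra.comul (R := K)) (Coalgebra.counit (R := K)) F) :
    chiF K H F * chiFinv K H Finv = 1 ∧ chiFinv K H Finv * chiF K H F = 1 := by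
  obtain ⟨hcocycle, hcounit_left, hcounit_right⟩ := htw
  constructor
  · rw [← mul₃IdAntipodeId_one_tmul_mul_assoc_tmul_one, twist_cocycle_inv_left hcocycle hF hF',
      mul₃IdAntipodeId_map_id_comul_mul_assoc_map_comul_id, hcounit_right,
      lid_map_counit_id_eq_one_of_mul_eq_one hF hcounit_left, one_mul]
  · rw [← mul₃AntipodeIdAntipode_assoc_tmul_one_mul_one_tmul,
      ← twist_cocycle_inv_right hcocycle hF hF',
      mul₃AntipodeIdAntipode_assoc_map_comul_id_mul_map_id_comul, hcounit_left,
      rid_map_id_counit_eq_one_of_mul_eq_one hF hcounit_right, antipode_one, one_mul]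
end

section
/- Given a Hopf algebra H with twist F, the deformed Hopf algebra H^F := (H, μ, Δ^F, ε, S^F) with Δ^F(ξ) = F Δ(ξ) F⁻¹ and S^F(ξ) = χ S(ξ) χ⁻¹ (where χ = fᵅS(f_ᵅ)) satisfies the antipode axiom: μ∘(S^F⊗id)∘Δ^F(ξ) = ε(ξ)1 = μ∘(id⊗S^F)∘Δ^F(ξ) for all ξ ∈ H. -/
/-!
Write `c ◁ (a ⊗ b) = S(a) c b` and `(a ⊗ b) ▷ c = a c S(b)`. Since `S` is an antihomomorphism these
are a right and a left action of `H ⊗ H` on `H`, and the antipode axiom of `H` reads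
`1 ◁ Δξ = ε(ξ) = Δξ ▷ 1`. Now `μ(S^F ⊗ id)(F Δξ F⁻¹) = χ (((χ⁻¹ ◁ F) ◁ Δξ) ◁ F⁻¹)` and
`χ⁻¹ ◁ F = 1 ◁ (F⁻¹ F) = 1`, so the left-hand side collapses to `ε(ξ) χ χ⁻¹`; the other side is
symmetric. Finally `χ χ⁻¹ = 1` is a consequence of the cocycle condition.
-/

open TensorProduct LinearMap

variable (K : Type*) [CommRing K] (H : Type*) [Ring H] [HopfAlgebra K H]

/-- The deformed antipode `S^F(ξ) = χ S(ξ) χ⁻¹`. -/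
noncomputable def antipodeF (F Finv : H ⊗[K] H) : H →ₗ[K] H :=
  (mulRight K (chiFinv K H Finv)) ∘ₗ (mulLeft K (chiF K H F)) ∘ₗ
    (HopfAlgebra.antipode (R := K))

open HopfAlgebra Coalgebra

section Actions

variable {R A : Type*} [CommSemiring R] [Semiring A] [HopfAlgebra R A]

noncomputable def antipodeRightAct : A →ₗ[R] A ⊗[R] A →ₗ[R] A :=
  llcomp R _ _ _ (mul' R A) ∘ₗ rTensorHom A ∘ₗ lcomp R A (antipode R) ∘ₗ (LinearMap.mul R A).flip

noncomputable def antipodeLeftAct : A →ₗ[R] A ⊗[R] A →ₗ[R] A :=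
  llcomp R _ _ _ (mul' R A) ∘ₗ lTensorHom A ∘ₗ lcomp R A (antipode R) ∘ₗ LinearMap.mul R A

@[simp] lemma antipodeRightAct_tmul (c a b : A) :
    antipodeRightAct c (a ⊗ₜ[R] b) = antipode R a * c * b := by
  simp [antipodeRightAct]

@[simp] lemma antipodeLeftAct_tmul (c a b : A) :
    antipodeLeftAct c (a ⊗ₜ[R] b) = a * c * antipode R b := by
  simp [antipodeLeftAct, mul_assoc]

lemma antipodeRightAct_mul (c : A) (t u : A ⊗[R] A) :
    antipodeRightAct c (t * u) = antipodeRightAct (antipodeRightAct c t) u := by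
  induction t using TensorProduct.induction_on with
  | zero => simp
  | add t t' ht ht' => simp only [add_mul, map_add, ht, ht', LinearMap.add_apply]
  | tmul a b =>
    induction u using TensorProduct.induction_on with
    | zero => simp
    | add u u' hu hu' => simp only [mul_add, map_add, hu, hu']
    | tmul x y => simp [antipode_mul_antidistrib, mul_assoc]

lemma antipodeLeftAct_mul (c : A) (t u : A ⊗[R] A) :
    antipodeLeftAct c (t * u) = antipodeLeftAct (antipodeLeftAct c u) t := by
  induction u using TensorProduct.induction_on with
  | zero => simp
  | add u u' hu hu' => simp only [mul_add, map_add, hu, hu', LinearMap.add_apply]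
  | tmul x y =>
    induction t using TensorProduct.induction_on with
    | zero => simp
    | add t t' ht ht' => simp only [add_mul, map_add, ht, ht']
    | tmul a b => simp [antipode_mul_antidistrib, mul_assoc]

lemma antipodeRightAct_one (c : A) : antipodeRightAct c (1 : A ⊗[R] A) = c := by
  simp [Algebra.TensorProduct.one_def]

lemma antipodeLeftAct_one (c : A) : antipodeLeftAct c (1 : A ⊗[R] A) = c := by
  simp [Algebra.TensorProduct.one_def]

lemma antipodeRightAct_one_comul (a : A) :
    antipodeRightAct 1 (comul (R := R) a) = counit (R := R) a • (1 : A) := by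
  have h : antipodeRightAct (1 : A) = mul' R A ∘ₗ rTensor A (antipode R) := by ext; simp
  rw [h, comp_apply, mul_antipode_rTensor_comul_apply, Algebra.algebraMap_eq_smul_one]

lemma antipodeLeftAct_one_comul (a : A) :
    antipodeLeftAct 1 (comul (R := R) a) = counit (R := R) a • (1 : A) := by
  have h : antipodeLeftAct (1 : A) = mul' R A ∘ₗ lTensor A (antipode R) := by ext; simp
  rw [h, comp_apply, mul_antipode_lTensor_comul_apply, Algebra.algebraMap_eq_smul_one]

noncomputable def antipodeMidAct (c : A) : A ⊗[R] (A ⊗[R] A) →ₗ[R] A :=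
  mul' R A ∘ₗ lTensor A (antipodeRightAct c)

@[simp] lemma antipodeMidAct_tmul (c a : A) (w : A ⊗[R] A) :
    antipodeMidAct c (a ⊗ₜ[R] w) = a * antipodeRightAct c w := by
  simp [antipodeMidAct]

lemma antipodeMidAct_one_tmul_mul (c : A) (u : A ⊗[R] A) (z : A ⊗[R] (A ⊗[R] A)) :
    antipodeMidAct c ((1 ⊗ₜ[R] u) * z) = antipodeMidAct (antipodeRightAct c u) z := by
  induction z using TensorProduct.induction_on with
  | zero => simp
  | add z z' hz hz' => simp only [mul_add, map_add, hz, hz']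
  | tmul a w => simp [Algebra.TensorProduct.tmul_mul_tmul, antipodeRightAct_mul]

lemma antipodeMidAct_assoc_tmul (c : A) (s : A ⊗[R] A) (d : A) :
    antipodeMidAct c (Algebra.TensorProduct.assoc R R R A A A (s ⊗ₜ[R] d))
      = antipodeLeftAct 1 s * c * d := by
  induction s using TensorProduct.induction_on with
  | zero => simp
  | add s s' hs hs' => simp only [add_tmul, map_add, hs, hs', add_mul]
  | tmul a b => simp [mul_assoc]

lemma antipodeMidAct_assoc_mul_map_comul (c : A) (v w : A ⊗[R] A) :
    antipodeMidAct c (Algebra.TensorProduct.assoc R R R A A A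
        ((v ⊗ₜ[R] 1) * map (comul (R := R)) id w))
      = antipodeLeftAct 1 v * c * TensorProduct.lid R A (map (counit (R := R)) id w) := by
  induction w using TensorProduct.induction_on with
  | zero => simp
  | add w w' hw hw' => simp only [map_add, mul_add, hw, hw']
  | tmul x y =>
    rw [map_tmul, Algebra.TensorProduct.tmul_mul_tmul, one_mul, id_apply,
      antipodeMidAct_assoc_tmul, antipodeLeftAct_mul, antipodeLeftAct_one_comul, map_smul]
    simp

lemma antipodeMidAct_one_map_comul (w : A ⊗[R] A) :
    antipodeMidAct 1 (map id (comul (R := R)) w)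
      = TensorProduct.rid R A (map id (counit (R := R)) w) := by
  induction w using TensorProduct.induction_on with
  | zero => simp
  | add w w' hw hw' => simp only [map_add, hw, hw']
  | tmul a b => simp [antipodeRightAct_one_comul]

end Actions

lemma chiF_eq_antipodeLeftAct (F : H ⊗[K] H) : chiF K H F = antipodeLeftAct 1 F := by
  rw [chiF, ← comp_apply]
  congr 1
  ext
  simp

lemma chiFinv_eq_antipodeRightAct (Finv : H ⊗[K] H) :
    chiFinv K H Finv = antipodeRightAct 1 Finv := by
  rw [chiFinv, ← comp_apply]
  congr 1
  ext
  simp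

lemma antipodeRightAct_chiFinv_self (F Finv : H ⊗[K] H) (hFinv : Finv * F = 1) :
    antipodeRightAct (chiFinv K H Finv) F = 1 := by
  rw [chiFinv_eq_antipodeRightAct, ← antipodeRightAct_mul, hFinv, antipodeRightAct_one]

lemma antipodeLeftAct_chiF_self (F Finv : H ⊗[K] H) (hFinv : Finv * F = 1) :
    antipodeLeftAct (chiF K H F) Finv = 1 := by
  rw [chiF_eq_antipodeLeftAct, ← antipodeLeftAct_mul, hFinv, antipodeLeftAct_one]

/-- The cocycle condition, multiplied on the left by `1 ⊗ F⁻¹` and evaluated under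
`a ⊗ b ⊗ d ↦ a S(b) d`, gives `χ χ⁻¹` on one side and `1` on the other. -/
lemma chiF_mul_chiFinv (F Finv : H ⊗[K] H) (hFinv : Finv * F = 1)
    (htw : IsTwist K H (comul (R := K)) (counit (R := K)) F) :
    chiF K H F * chiFinv K H Finv = 1 := by
  obtain ⟨hcocycle, hε_left, hε_right⟩ := htw
  set aT := Algebra.TensorProduct.assoc K K K H H H
  calc chiF K H F * chiFinv K H Finv
      = antipodeMidAct (chiFinv K H Finv) (aT ((F ⊗ₜ 1) * map comul id F)) := by
        rw [antipodeMidAct_assoc_mul_map_comul, hε_left, mul_one, chiF_eq_antipodeLeftAct]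
    _ = antipodeMidAct 1 ((1 ⊗ₜ Finv) * (aT (F ⊗ₜ 1) * aT (map comul id F))) := by
        rw [antipodeMidAct_one_tmul_mul, ← chiFinv_eq_antipodeRightAct, map_mul]
    _ = antipodeMidAct 1 ((1 ⊗ₜ Finv) * ((1 ⊗ₜ F) * map id comul F)) := by rw [hcocycle]
    _ = 1 := by
        rw [antipodeMidAct_one_tmul_mul, antipodeMidAct_one_tmul_mul,
          ← chiFinv_eq_antipodeRightAct, antipodeRightAct_chiFinv_self K H F Finv hFinv,
          antipodeMidAct_one_map_comul, hε_right]

lemma mul'_map_antipodeF_id (F Finv w : H ⊗[K] H) :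
    mul' K H (map (antipodeF K H F Finv) id w)
      = chiF K H F * antipodeRightAct (chiFinv K H Finv) w := by
  rw [← mulLeft_apply (R := K), ← comp_apply, ← comp_apply]
  congr 1
  ext
  simp [antipodeF, mul_assoc]

lemma mul'_map_id_antipodeF (F Finv w : H ⊗[K] H) :
    mul' K H (map id (antipodeF K H F Finv) w)
      = antipodeLeftAct (chiF K H F) w * chiFinv K H Finv := by
  rw [← mulRight_apply (R := K), ← comp_apply, ← comp_apply]
  congr 1
  ext
  simp [antipodeF, mul_assoc]

theorem antipodeF_axiom (F Finv : H ⊗[K] H) (hF' : Finv * F = 1)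
    (htw : IsTwist K H (Coalgebra.comul (R := K)) (Coalgebra.counit (R := K)) F) :
    ∀ ξ : H,
      LinearMap.mul' K H
        (TensorProduct.map (antipodeF K H F Finv) LinearMap.id ((comulF K H F Finv) ξ))
        = Coalgebra.counit (R := K) ξ • (1 : H)
      ∧ LinearMap.mul' K H
        (TensorProduct.map LinearMap.id (antipodeF K H F Finv) ((comulF K H F Finv) ξ))
        = Coalgebra.counit (R := K) ξ • (1 : H) := by
  intro ξ
  have hχ := chiF_mul_chiFinv K H F Finv hF' htw
  have hcomulF : comulF K H F Finv ξ = F * comul (R := K) ξ * Finv := rfl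
  constructor
  · rw [mul'_map_antipodeF_id, hcomulF, antipodeRightAct_mul, antipodeRightAct_mul,
      antipodeRightAct_chiFinv_self K H F Finv hF', antipodeRightAct_one_comul, map_smul,
      LinearMap.smul_apply, ← chiFinv_eq_antipodeRightAct, mul_smul_comm, hχ]
  · rw [mul'_map_id_antipodeF, hcomulF, antipodeLeftAct_mul,
      antipodeLeftAct_chiF_self K H F Finv hF', antipodeLeftAct_mul, antipodeLeftAct_one_comul,
      map_smul, LinearMap.smul_apply, ← chiF_eq_antipodeLeftAct, smul_mul_assoc, hχ]
end

section
/- Let H be a Hopf algebra, A a left H-module algebra, V a left H-module A-bimodule, and F a twist. Then V_⋆ with actions a⋆v = (f̄ᵅ▷a)·(f̄_ᵅ▷v) and v⋆a = (f̄ᵅ▷v)·(f̄_ᵅ▷a) is an A_⋆-bimodule: (a⋆v)⋆b = a⋆(v⋆b), a⋆(b⋆v) = (a⋆b)⋆v, and (v⋆a)⋆b = v⋆(a⋆b) for all a,b ∈ A, v ∈ V. -/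
open TensorProduct LinearMap

/-- Generic "Sweedler application": for a bilinear map `B`, families `F x, G y : H →ₗ M/N`
and a tensor `t = Σ t₁ ⊗ t₂ ∈ H ⊗ H`, this is the bilinear map
`(x, y) ↦ Σ B (F x t₁) (G y t₂)`. -/
noncomputable def sw {K : Type*} [CommRing K] {H M N P X Y : Type*}
    [AddCommGroup H] [Module K H] [AddCommGroup M] [Module K M] [AddCommGroup N] [Module K N]
    [AddCommGroup P] [Module K P] [AddCommGroup X] [Module K X] [AddCommGroup Y] [Module K Y]
    (B : M →ₗ[K] N →ₗ[K] P) (F : X →ₗ[K] H →ₗ[K] M)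
    (G : Y →ₗ[K] H →ₗ[K] N) (t : H ⊗[K] H) : X →ₗ[K] Y →ₗ[K] P :=
  LinearMap.mk₂ K (fun x y => TensorProduct.lift (B.compl₁₂ (F x) (G y)) t)
    (fun x x' y => by
      induction t using TensorProduct.induction_on with
      | zero => simp
      | tmul η ζ => simp [map_add]
      | add u v hu hv => simp only [map_add] at hu hv ⊢; rw [hu, hv]; abel)
    (fun c x y => by
      induction t using TensorProduct.induction_on with
      | zero => simp
      | tmul η ζ => simp [map_smul]
      | add u v hu hv => simp only [map_add] at hu hv ⊢; rw [hu, hv]; rw [smul_add])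
    (fun x y y' => by
      induction t using TensorProduct.induction_on with
      | zero => simp
      | tmul η ζ => simp [map_add]
      | add u v hu hv => simp only [map_add] at hu hv ⊢; rw [hu, hv]; abel)
    (fun c x y => by
      induction t using TensorProduct.induction_on with
      | zero => simp
      | tmul η ζ => simp [map_smul]
      | add u v hu hv => simp only [map_add] at hu hv ⊢; rw [hu, hv]; rw [smul_add])

variable (K : Type*) [CommRing K] (H : Type*) [Ring H] [HopfAlgebra K H]

variable (A : Type*) [Ring A] [Algebra K A]

/-- `A` is a left `H`-module algebra via the `K`-linear action `act`:
`act` is a unital multiplicative action, `ξ▷(ab) = (ξ₁▷a)(ξ₂▷b)` and `ξ▷1 = ε(ξ)1`. -/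
noncomputable def IsModuleAlgebra (act : H →ₗ[K] A →ₗ[K] A) : Prop :=
  (∀ ξ ζ : H, act (ξ * ζ) = act ξ ∘ₗ act ζ) ∧ (act 1 = LinearMap.id)
  ∧ (∀ (ξ : H) (a b : A),
      act ξ (a * b) = sw (LinearMap.mul K A) act.flip act.flip (Coalgebra.comul (R := K) ξ) a b)
  ∧ (∀ ξ : H, act ξ (1 : A) = Coalgebra.counit (R := K) ξ • (1 : A))

/-- The star product `a ⋆ b = (f̄ᵅ▷a)(f̄_ᵅ▷b)`, as a bilinear map. -/
noncomputable def starBil (act : H →ₗ[K] A →ₗ[K] A) (Finv : H ⊗[K] H) : A →ₗ[K] A →ₗ[K] A :=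
  sw (LinearMap.mul K A) act.flip act.flip Finv

variable (V : Type*) [AddCommGroup V] [Module K V]

/-- `V` is a left `H`-module `A`-bimodule: `l` is a left `A`-action, `r` a right `A`-action
(`r a v = v·a`), they commute, and `ρ` is a left `H`-action satisfying
`ξ▷(a·v) = (ξ₁▷a)·(ξ₂▷v)` and `ξ▷(v·a) = (ξ₁▷v)·(ξ₂▷a)`. -/
noncomputable def IsHModuleBimodule (act : H →ₗ[K] A →ₗ[K] A)
    (l r : A →ₗ[K] V →ₗ[K] V) (ρ : H →ₗ[K] V →ₗ[K] V) : Prop :=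
  (∀ a b : A, l (a * b) = l a ∘ₗ l b) ∧ (l 1 = LinearMap.id)
  ∧ (∀ a b : A, r (a * b) = r b ∘ₗ r a) ∧ (r 1 = LinearMap.id)
  ∧ (∀ a b : A, l a ∘ₗ r b = r b ∘ₗ l a)
  ∧ (∀ ξ ζ : H, ρ (ξ * ζ) = ρ ξ ∘ₗ ρ ζ) ∧ (ρ 1 = LinearMap.id)
  ∧ (∀ (ξ : H) (a : A) (v : V),
      ρ ξ (l a v) = sw l act.flip ρ.flip (Coalgebra.comul (R := K) ξ) a v)
  ∧ (∀ (ξ : H) (a : A) (v : V),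
      ρ ξ (r a v) = sw r.flip ρ.flip act.flip (Coalgebra.comul (R := K) ξ) v a)

/-- `V` is a left `H`-module right `A`-module: `r` a right `A`-action (`r a v = v·a`),
`ρ` a left `H`-action with `ξ▷(v·a) = (ξ₁▷v)·(ξ₂▷a)`. -/
noncomputable def IsHModuleRight (act : H →ₗ[K] A →ₗ[K] A)
    (r : A →ₗ[K] V →ₗ[K] V) (ρ : H →ₗ[K] V →ₗ[K] V) : Prop :=
  (∀ a b : A, r (a * b) = r b ∘ₗ r a) ∧ (r 1 = LinearMap.id)
  ∧ (∀ ξ ζ : H, ρ (ξ * ζ) = ρ ξ ∘ₗ ρ ζ) ∧ (ρ 1 = LinearMap.id)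
  ∧ (∀ (ξ : H) (a : A) (v : V),
      ρ ξ (r a v) = sw r.flip ρ.flip act.flip (Coalgebra.comul (R := K) ξ) v a)

/-- The deformed left action `a ⋆ v = (f̄ᵅ▷a)·(f̄_ᵅ▷v)`. -/
noncomputable def lstar (act : H →ₗ[K] A →ₗ[K] A) (l : A →ₗ[K] V →ₗ[K] V)
    (ρ : H →ₗ[K] V →ₗ[K] V) (Finv : H ⊗[K] H) : A →ₗ[K] V →ₗ[K] V :=
  sw l act.flip ρ.flip Finv

/-- The deformed right action `v ⋆ a = (f̄ᵅ▷v)·(f̄_ᵅ▷a)`. -/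
noncomputable def rstar (act : H →ₗ[K] A →ₗ[K] A) (r : A →ₗ[K] V →ₗ[K] V)
    (ρ : H →ₗ[K] V →ₗ[K] V) (Finv : H ⊗[K] H) : V →ₗ[K] A →ₗ[K] V :=
  sw r.flip ρ.flip act.flip Finv

/-! Each side of each identity is a sum of `B₁ (B₂ (ξ ▷ x) (η ▷ y)) (ζ ▷ z)` or of
`B₁ (ξ ▷ x) (B₂ (η ▷ y) (ζ ▷ z))` over a tensor `ξ ⊗ η ⊗ ζ` in `H ⊗ H ⊗ H`: expanding
`η ▷ B₂ (y', z')` by equivariance and absorbing the inner `F⁻¹` by multiplicativity of the actions,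
the left-nested products run over `(Δ ⊗ id)(F⁻¹) (F⁻¹ ⊗ 1)` and the right-nested ones over
`(id ⊗ Δ)(F⁻¹) (1 ⊗ F⁻¹)`. These two tensors agree, being the inverses of the two sides of the
cocycle condition, and the bimodule axioms identify the two nestings pointwise. -/

section Sweedler

variable {K H : Type*} [CommRing K] [Ring H] [Algebra K H]
variable {X Y Z U W : Type*} [AddCommGroup X] [Module K X] [AddCommGroup Y] [Module K Y]
  [AddCommGroup Z] [Module K Z] [AddCommGroup U] [Module K U] [AddCommGroup W] [Module K W]

theorem sw_apply {M N P : Type*} [AddCommGroup M] [Module K M] [AddCommGroup N] [Module K N]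
    [AddCommGroup P] [Module K P] (B : M →ₗ[K] N →ₗ[K] P) (F : X →ₗ[K] H →ₗ[K] M)
    (G : Y →ₗ[K] H →ₗ[K] N) (t : H ⊗[K] H) (x : X) (y : Y) :
    sw B F G t x y = lift (B.compl₁₂ (F x) (G y)) t := rfl

theorem sw_act_act (B : X →ₗ[K] Y →ₗ[K] Z) {αX : H →ₗ[K] X →ₗ[K] X} {αY : H →ₗ[K] Y →ₗ[K] Y}
    (hX : ∀ ξ ζ : H, αX (ξ * ζ) = αX ξ ∘ₗ αX ζ) (hY : ∀ ξ ζ : H, αY (ξ * ζ) = αY ξ ∘ₗ αY ζ)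
    (u : H ⊗[K] H) (ξ ζ : H) (x : X) (y : Y) :
    sw B αX.flip αY.flip u (αX ξ x) (αY ζ y) = sw B αX.flip αY.flip (u * ξ ⊗ₜ ζ) x y := by
  simp only [sw_apply]
  induction u using TensorProduct.induction_on with
  | zero => simp
  | tmul η θ => simp [Algebra.TensorProduct.tmul_mul_tmul, hX, hY]
  | add u u' hu hu' => simp only [map_add, add_mul, hu, hu']

variable [Coalgebra K H]

def IsEquivariantBilin (αX : H →ₗ[K] X →ₗ[K] X) (αY : H →ₗ[K] Y →ₗ[K] Y)
    (αZ : H →ₗ[K] Z →ₗ[K] Z) (B : X →ₗ[K] Y →ₗ[K] Z) : Prop :=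
  ∀ (ξ : H) (x : X) (y : Y), αZ ξ (B x y) = sw B αX.flip αY.flip (Coalgebra.comul (R := K) ξ) x y

variable {αX : H →ₗ[K] X →ₗ[K] X} {αY : H →ₗ[K] Y →ₗ[K] Y} {αZ : H →ₗ[K] Z →ₗ[K] Z}
  {B : X →ₗ[K] Y →ₗ[K] Z}

theorem IsEquivariantBilin.act_lift (hB : IsEquivariantBilin αX αY αZ B)
    (hX : ∀ ξ ζ : H, αX (ξ * ζ) = αX ξ ∘ₗ αX ζ) (hY : ∀ ξ ζ : H, αY (ξ * ζ) = αY ξ ∘ₗ αY ζ)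
    (ξ : H) (s : H ⊗[K] H) (x : X) (y : Y) :
    αZ ξ (lift (B.compl₁₂ (αX.flip x) (αY.flip y)) s)
      = lift (B.compl₁₂ (αX.flip x) (αY.flip y)) (Coalgebra.comul (R := K) ξ * s) := by
  induction s using TensorProduct.induction_on with
  | zero => simp
  | tmul η θ =>
    rw [lift.tmul, compl₁₂_apply, flip_apply, flip_apply, hB, sw_act_act B hX hY, sw_apply]
  | add s s' hs hs' => rw [map_add, map_add, hs, hs', mul_add, map_add]

theorem IsEquivariantBilin.sw_sw_right (hB : IsEquivariantBilin αX αY αZ B)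
    (hX : ∀ ξ ζ : H, αX (ξ * ζ) = αX ξ ∘ₗ αX ζ) (hY : ∀ ξ ζ : H, αY (ξ * ζ) = αY ξ ∘ₗ αY ζ)
    (B' : U →ₗ[K] Z →ₗ[K] W) (αU : H →ₗ[K] U →ₗ[K] U) (t s : H ⊗[K] H) (u : U) (x : X) (y : Y) :
    sw B' αU.flip αZ.flip t u (sw B αX.flip αY.flip s x y)
      = lift (B'.compl₁₂ (αU.flip u) (lift (B.compl₁₂ (αX.flip x) (αY.flip y))))
          (map LinearMap.id (Coalgebra.comul (R := K)) t * (1 ⊗ₜ s)) := by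
  induction t using TensorProduct.induction_on with
  | zero => simp [sw_apply]
  | tmul ξ η =>
    simp [sw_apply, Algebra.TensorProduct.tmul_mul_tmul, hB.act_lift hX hY]
  | add t t' ht ht' => simp only [sw_apply, map_add, add_mul] at ht ht' ⊢; rw [ht, ht']

theorem IsEquivariantBilin.sw_sw_left (hB : IsEquivariantBilin αX αY αZ B)
    (hX : ∀ ξ ζ : H, αX (ξ * ζ) = αX ξ ∘ₗ αX ζ) (hY : ∀ ξ ζ : H, αY (ξ * ζ) = αY ξ ∘ₗ αY ζ)
    (B' : Z →ₗ[K] U →ₗ[K] W) (αU : H →ₗ[K] U →ₗ[K] U) (t s : H ⊗[K] H) (x : X) (y : Y) (u : U) :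
    sw B' αZ.flip αU.flip t (sw B αX.flip αY.flip s x y) u
      = lift (B'.compl₁₂ (lift (B.compl₁₂ (αX.flip x) (αY.flip y))) (αU.flip u))
          (map (Coalgebra.comul (R := K)) LinearMap.id t * (s ⊗ₜ 1)) := by
  induction t using TensorProduct.induction_on with
  | zero => simp [sw_apply]
  | tmul ξ η =>
    simp [sw_apply, Algebra.TensorProduct.tmul_mul_tmul, hB.act_lift hX hY]
  | add t t' ht ht' => simp only [sw_apply, map_add, add_mul] at ht ht' ⊢; rw [ht, ht']

end Sweedler

theorem mul_mul_mul_eq_one_of_mul_eq_one {M : Type*} [Monoid M] {a a' b b' : M}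
    (ha : a' * a = 1) (hb : b' * b = 1) : b' * a' * (a * b) = 1 := by
  rw [mul_assoc, ← mul_assoc a', ha, one_mul, hb]

theorem assoc_map_comul_inv_twist {K H : Type*} [CommRing K] [Ring H] [Bialgebra K H]
    {F Finv : H ⊗[K] H} (hF : F * Finv = 1) (hF' : Finv * F = 1)
    (hcoc : Algebra.TensorProduct.assoc K K K H H H (F ⊗ₜ[K] (1 : H))
        * Algebra.TensorProduct.assoc K K K H H H (map (Coalgebra.comul (R := K)) LinearMap.id F)
      = ((1 : H) ⊗ₜ[K] F) * map LinearMap.id (Coalgebra.comul (R := K)) F) :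
    Algebra.TensorProduct.assoc K K K H H H
        (map (Coalgebra.comul (R := K)) LinearMap.id Finv * Finv ⊗ₜ[K] (1 : H))
      = map LinearMap.id (Coalgebra.comul (R := K)) Finv * ((1 : H) ⊗ₜ[K] Finv) := by
  have inv (g : H ⊗[K] H →ₐ[K] H ⊗[K] (H ⊗[K] H)) : g Finv * g F = 1 ∧ g F * g Finv = 1 :=
    ⟨by rw [← map_mul, hF', map_one], by rw [← map_mul, hF, map_one]⟩
  let assoc := (Algebra.TensorProduct.assoc K K K H H H).toAlgHom
  let comulAlg := Bialgebra.comulAlgHom K H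
  rw [map_mul]
  refine left_inv_eq_right_inv
    (a := ((1 : H) ⊗ₜ[K] F) * map LinearMap.id (Coalgebra.comul (R := K)) F) ?_ ?_
  · rw [← hcoc]
    exact mul_mul_mul_eq_one_of_mul_eq_one (inv (assoc.comp Algebra.TensorProduct.includeLeft)).1
      (inv (assoc.comp (Algebra.TensorProduct.map comulAlg (AlgHom.id K H)))).1
  · exact mul_mul_mul_eq_one_of_mul_eq_one
      (inv (Algebra.TensorProduct.map (AlgHom.id K H) comulAlg)).2
      (inv Algebra.TensorProduct.includeRight).2

theorem eq_apply_assoc_of_tmul {K M N P W : Type*} [CommRing K] [AddCommGroup M] [Module K M]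
    [AddCommGroup N] [Module K N] [AddCommGroup P] [Module K P] [AddCommGroup W] [Module K W]
    {f : (M ⊗[K] N) ⊗[K] P →ₗ[K] W} {g : M ⊗[K] (N ⊗[K] P) →ₗ[K] W}
    (h : ∀ m n p, f (m ⊗ₜ n ⊗ₜ p) = g (m ⊗ₜ (n ⊗ₜ p))) (x : (M ⊗[K] N) ⊗[K] P) :
    f x = g (TensorProduct.assoc K M N P x) :=
  LinearMap.congr_fun (ext_threefold (h := g ∘ₗ (TensorProduct.assoc K M N P).toLinearMap) h) x

/-- the deformed module `V_⋆` with actions `a⋆v = (f̄ᵅ▷a)·(f̄_ᵅ▷v)` and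
`v⋆a = (f̄ᵅ▷v)·(f̄_ᵅ▷a)` is an `A_⋆`-bimodule: `(a⋆v)⋆b = a⋆(v⋆b)`, `a⋆(b⋆v) = (a⋆b)⋆v`
and `(v⋆a)⋆b = v⋆(a⋆b)`. -/
theorem deformed_bimodule (act : H →ₗ[K] A →ₗ[K] A) (hMA : IsModuleAlgebra K H A act)
    (l r : A →ₗ[K] V →ₗ[K] V) (ρ : H →ₗ[K] V →ₗ[K] V)
    (hV : IsHModuleBimodule K H A V act l r ρ)
    (F Finv : H ⊗[K] H) (hF : F * Finv = 1) (hF' : Finv * F = 1)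
    (htw : IsTwist K H (Coalgebra.comul (R := K)) (Coalgebra.counit (R := K)) F) :
    ∀ (a b : A) (v : V),
      rstar K H A V act r ρ Finv (lstar K H A V act l ρ Finv a v) b
        = lstar K H A V act l ρ Finv a (rstar K H A V act r ρ Finv v b)
      ∧ lstar K H A V act l ρ Finv a (lstar K H A V act l ρ Finv b v)
        = lstar K H A V act l ρ Finv (starBil K H A act Finv a b) v
      ∧ rstar K H A V act r ρ Finv (rstar K H A V act r ρ Finv v a) b
        = rstar K H A V act r ρ Finv v (starBil K H A act Finv a b) := by
  obtain ⟨hact_mul, -, hact_prod, -⟩ := hMA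
  obtain ⟨hl_mul, -, hr_mul, -, hlr, hρ_mul, -, hρl, hρr⟩ := hV
  have hmul : IsEquivariantBilin act act act (LinearMap.mul K A) := hact_prod
  have hl : IsEquivariantBilin act ρ ρ l := hρl
  have hr : IsEquivariantBilin ρ act ρ r.flip := fun ξ v a => hρr ξ a v
  have hcoc := assoc_map_comul_inv_twist hF hF' htw.1
  intro a b v
  refine ⟨?_, ?_, ?_⟩
  · rw [rstar, lstar, hl.sw_sw_left hact_mul hρ_mul, hr.sw_sw_right hρ_mul hact_mul, ← hcoc]
    refine eq_apply_assoc_of_tmul (fun ξ η ζ => ?_) _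
    simp only [lift.tmul, compl₁₂_apply, flip_apply]
    exact (LinearMap.congr_fun (hlr _ _) _).symm
  · rw [lstar, starBil, hl.sw_sw_right hact_mul hρ_mul, hmul.sw_sw_left hact_mul hact_mul, ← hcoc]
    refine (eq_apply_assoc_of_tmul (fun ξ η ζ => ?_) _).symm
    simp only [lift.tmul, compl₁₂_apply, flip_apply, mul_apply']
    exact LinearMap.congr_fun (hl_mul _ _) _
  · rw [rstar, starBil, hr.sw_sw_left hρ_mul hact_mul, hmul.sw_sw_right hact_mul hact_mul, ← hcoc]
    refine eq_apply_assoc_of_tmul (fun ξ η ζ => ?_) _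
    simp only [lift.tmul, compl₁₂_apply, flip_apply, mul_apply']
    exact (LinearMap.congr_fun (hr_mul _ _) _).symm
end
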